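/- arXiv:1109.2256 — 9 statements merged into one kernel-verified Lean document; each statement's English description precedes it below -/
import Mathlib

section
/- For an odd prime p and integer m not divisible by p, the sign of the permutation of Z/pZ given by multiplication by m equals the Legendre symbol (m/p). -/
/-!
The maps `u ↦ sign (x ↦ u * x)` and the quadratic character are both homomorphisms
`Fˣ → {±1}` for a finite field `F` of odd order `q`. Since `Fˣ` is cyclic it suffices to compare
them on a generator `g`: multiplication by `g` is a single `(q - 1)`-cycle on `F \ {0}`, hence
odd, and `g` is not a square because otherwise every element of `F` would be one.
-/

open Equiv Equiv.Perm Subgroup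

namespace FiniteField

variable {F : Type*} [Field F]

lemma support_toPerm_units [Fintype F] [DecidableEq F] {u : Fˣ} (hu : u ≠ 1) :
    (MulAction.toPerm u : Perm F).support = {0}ᶜ := by
  ext x
  simp only [mem_support, MulAction.toPerm_apply, Units.smul_def, Finset.mem_compl,
    Finset.mem_singleton]
  constructor
  · rintro h rfl
    simp at h
  · intro hx h
    exact hu (Units.val_eq_one.mp (mul_right_cancel₀ hx (h.trans (one_mul x).symm)))

lemma isCycle_toPerm_of_generator {g : Fˣ} (hg : ∀ x, x ∈ zpowers g) (hg1 : g ≠ 1) :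
    (MulAction.toPerm g : Perm F).IsCycle := by
  refine ⟨1, by simpa [Units.smul_def] using hg1, fun y hy => ?_⟩
  have hy0 : y ≠ 0 := by
    rintro rfl
    simp at hy
  obtain ⟨k, hk⟩ := mem_zpowers_iff.mp (hg (Units.mk0 y hy0))
  refine ⟨k, ?_⟩
  change (MulAction.toPermHom Fˣ F g ^ k) 1 = y
  rw [← map_zpow]
  simp [Units.smul_def, hk]

lemma generator_ne_one (hF : ringChar F ≠ 2) {g : Fˣ} (hg : ∀ x, x ∈ zpowers g) : g ≠ 1 := by
  rintro rfl
  have h : (-1 : Fˣ) ∈ zpowers 1 := hg _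
  rw [zpowers_one_eq_bot, mem_bot] at h
  exact Ring.neg_one_ne_one_of_char_ne_two hF (congrArg Units.val h)

lemma sign_toPerm_generator [Fintype F] [DecidableEq F] (hF : ringChar F ≠ 2) {g : Fˣ}
    (hg : ∀ x, x ∈ zpowers g) : sign (MulAction.toPerm g : Perm F) = -1 := by
  have hg1 := generator_ne_one hF hg
  have heven : Even (Fintype.card F - 1) :=
    Nat.Odd.sub_odd (Nat.odd_iff.mpr (odd_card_of_char_ne_two hF)) odd_one
  rw [(isCycle_toPerm_of_generator hg hg1).sign, support_toPerm_units hg1, Finset.card_compl,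
    Finset.card_singleton, heven.neg_one_pow]

lemma not_isSquare_generator [Finite F] (hF : ringChar F ≠ 2) {g : Fˣ}
    (hg : ∀ x, x ∈ zpowers g) : ¬IsSquare (g : F) := by
  intro hsq
  obtain ⟨a, ha⟩ := exists_nonsquare hF
  apply ha
  rcases eq_or_ne a 0 with rfl | ha0
  · exact ⟨0, (mul_zero 0).symm⟩
  obtain ⟨k, hk⟩ := mem_zpowers_iff.mp (hg (Units.mk0 a ha0))
  have hpow : (g : F) ^ k = a := by
    rw [← Units.val_zpow_eq_zpow_val, hk, Units.val_mk0]
  exact hpow ▸ hsq.zpow k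

theorem sign_mulLeft₀_eq_quadraticChar [Fintype F] [DecidableEq F] (hF : ringChar F ≠ 2)
    {a : F} (ha : a ≠ 0) : (sign (Equiv.mulLeft₀ a ha) : ℤ) = quadraticChar F a := by
  obtain ⟨g, hg⟩ := IsCyclic.exists_generator (α := Fˣ)
  have hom_eq : sign.comp (MulAction.toPermHom Fˣ F) = (quadraticChar F).toUnitHom := by
    rw [MonoidHom.eq_iff_eq_on_generator hg]
    ext
    simp [sign_toPerm_generator hF hg,
      quadraticChar_neg_one_iff_not_isSquare.mpr (not_isSquare_generator hF hg)]
  exact congrArg Units.val (DFunLike.congr_fun hom_eq (Units.mk0 a ha))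

end FiniteField

/-- Zolotarev's lemma: for an odd prime `p` and an integer `m` not divisible by `p`,
the sign of the permutation of `ZMod p` given by multiplication by `m` equals the
Legendre symbol `(m/p)`. -/
theorem zolotarev (p : ℕ) [Fact p.Prime] (hp : p ≠ 2) (m : ℤ) (hm : ¬ ((p : ℤ) ∣ m)) :
    ((Equiv.Perm.sign
        (Equiv.mulLeft₀ (m : ZMod p)
          (fun h => hm ((ZMod.intCast_zmod_eq_zero_iff_dvd m p).mp h))) : ℤˣ) : ℤ) =
      legendreSym p m :=
  FiniteField.sign_mulLeft₀_eq_quadraticChar ((ZMod.ringChar_zmod_n p).trans_ne hp) _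
end

section
/- For any finite group G, the integer d_G := (-1)^((|G|-|f₂(G)|)/2) · |G|^{|f₂(G)|} / n₂(G)^{ε(G)} is congruent to 0 or 1 modulo 4. -/
open Function

lemma parity_lemma (G : Type*) [Group G] [Fintype G] :
    Fintype.card G % 2 = Nat.card {g : G // g ^ 2 = 1} % 2 := by
  classical
  set f : Function.End G := fun g => g⁻¹ with hfdef
  have hf : f ^ 2 ^ 1 = 1 := by
    funext g
    show f (f g) = g
    simp [hfdef]
  have h := Equiv.Perm.card_fixedPoints_modEq (f := f) (p := 2) (n := 1) hf
  have hcard : Nat.card {g : G // g ^ 2 = 1} = Fintype.card f.fixedPoints := by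
    rw [Nat.card_eq_fintype_card]
    apply Fintype.card_congr
    apply Equiv.subtypeEquivRight
    intro g
    show g ^ 2 = 1 ↔ g⁻¹ = g
    rw [pow_two, mul_eq_one_iff_inv_eq]
  rw [hcard]
  exact h

/-- For any finite group `G`, the integer
`d_G = (-1)^((|G|-|f₂(G)|)/2) · |G|^{|f₂(G)|} / n₂(G)^{ε(G)}`
is congruent to `0` or `1` modulo `4`. -/
theorem dG_zero_or_one_mod_four (G : Type*) [Group G] [Fintype G] :
    ((-1 : ℤ) ^ ((Fintype.card G - Nat.card {g : G // g ^ 2 = 1}) / 2) *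
        ((Fintype.card G ^ Nat.card {g : G // g ^ 2 = 1} /
          Nat.card (Sylow 2 G) ^
            (if Fintype.card G = 2 * Nat.card (Sylow 2 G) then 1 else 0) : ℕ) : ℤ)) % 4 = 0 ∨
    ((-1 : ℤ) ^ ((Fintype.card G - Nat.card {g : G // g ^ 2 = 1}) / 2) *
        ((Fintype.card G ^ Nat.card {g : G // g ^ 2 = 1} /
          Nat.card (Sylow 2 G) ^
            (if Fintype.card G = 2 * Nat.card (Sylow 2 G) then 1 else 0) : ℕ) : ℤ)) % 4 = 1 := by
  classical
  haveI : Nonempty {g : G // g ^ 2 = 1} := ⟨⟨1, one_pow 2⟩⟩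
  set n := Fintype.card G with hn
  set fc := Nat.card {g : G // g ^ 2 = 1} with hfc
  set s := Nat.card (Sylow 2 G) with hs
  have hpar : n % 2 = fc % 2 := parity_lemma G
  have hnpos : 0 < n := Fintype.card_pos
  rcases Nat.even_or_odd n with he | ho
  · -- even case: the value is divisible by 4
    left
    have hfcpos : 0 < fc := Nat.card_pos
    have hne : n % 2 = 0 := Nat.even_iff.mp he
    have hfc2 : 2 ≤ fc := by omega
    obtain ⟨m, hm⟩ := he
    have hdvd : 4 ∣ (n ^ fc / s ^ (if n = 2 * s then 1 else 0)) := by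
      by_cases h2s : n = 2 * s
      · rw [if_pos h2s, pow_one]
        have hs0 : 0 < s := Nat.card_pos
        have hkey : n ^ fc = s * (2 * n ^ (fc - 1)) := by
          calc n ^ fc = n * n ^ (fc - 1) := by
                rw [← pow_succ']
                congr 1
                omega
            _ = s * (2 * n ^ (fc - 1)) := by rw [h2s]; ring
        rw [hkey, Nat.mul_div_cancel_left _ hs0]
        have h2dvd : 2 ∣ n ^ (fc - 1) := dvd_pow ⟨m, by omega⟩ (by omega)
        obtain ⟨k, hk⟩ := h2dvd
        exact ⟨k, by omega⟩
      · rw [if_neg h2s, pow_zero, Nat.div_one]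
        have hsq : n ^ 2 ∣ n ^ fc := pow_dvd_pow n hfc2
        have h4 : 4 ∣ n ^ 2 := ⟨m ^ 2, by rw [hm]; ring⟩
        exact h4.trans hsq
    have h4z : (4 : ℤ) ∣ ((n ^ fc / s ^ (if n = 2 * s then 1 else 0) : ℕ) : ℤ) := by
      exact_mod_cast hdvd
    exact Int.emod_eq_zero_of_dvd (h4z.mul_left _)
  · -- odd case: value ≡ 1 mod 4
    right
    have hno : n % 2 = 1 := Nat.odd_iff.mp ho
    have hfc1 : fc = 1 := by
      have huniq : ∀ g : G, g ^ 2 = 1 → g = 1 := by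
        intro g hg
        have h1 : orderOf g ∣ 2 := orderOf_dvd_of_pow_eq_one hg
        have h2 : orderOf g ∣ n := hn ▸ orderOf_dvd_card
        have h3 : orderOf g = 1 := by
          rcases (Nat.dvd_prime Nat.prime_two).mp h1 with h | h
          · exact h
          · exfalso; rw [h] at h2; obtain ⟨k, hk⟩ := h2; omega
        exact orderOf_eq_one_iff.mp h3
      rw [hfc, Nat.card_eq_one_iff_unique]
      refine ⟨⟨fun a b => ?_⟩, inferInstance⟩
      ext
      rw [huniq a a.2, huniq b b.2]
    have hif : ¬ (n = 2 * s) := by omega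
    rw [if_neg hif, hfc1, pow_one, pow_zero, Nat.div_one]
    have h14 : n % 4 = 1 ∨ n % 4 = 3 := by omega
    rcases h14 with h14 | h14
    · have heven : Even ((n - 1) / 2) := Nat.even_iff.mpr (by omega)
      rw [heven.neg_one_pow, one_mul]
      omega
    · have hodd : Odd ((n - 1) / 2) := Nat.odd_iff.mpr (by omega)
      rw [hodd.neg_one_pow]
      omega
end

section
/- Let G be a finite group and a coprime to |G|. For each divisor d of |G|, the set G_d of elements of order d is invariant under the a-th power map ρ_a, and ρ_a restricted to G_d is a product of G(d)/o_d(a) disjoint cycles each of length o_d(a), where G(d) = |G_d| and o_d(a) is the multiplicative order of a mod d. -/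
/-!
Iterating `g ↦ g ^ a` gives `g ↦ g ^ (a ^ k)`, which fixes `g` exactly when
`a ^ k ≡ 1 [ZMOD orderOf g]`; so every point of order `d` has minimal period `o_d(a)`, and the
orbits, all of that length, partition the elements of order `d`. Invariance of the order holds
because `a` is invertible modulo `orderOf g`, so `g` is itself a power of `g ^ a`.
-/

open Function MulAction Subgroup

theorem Function.Semiconj.minimalPeriod_eq_of_injective {α β : Type*} {f : α → α}
    {g : β → β} {φ : α → β} (h : Semiconj φ f g) (hφ : Injective φ) (x : α) :
    minimalPeriod f x = minimalPeriod g (φ x) :=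
  Nat.dvd_right_iff_eq.mp fun k => by
    rw [← isPeriodicPt_iff_minimalPeriod_dvd, ← isPeriodicPt_iff_minimalPeriod_dvd,
      IsPeriodicPt, IsPeriodicPt, IsFixedPt, IsFixedPt, ← (h.iterate_right k) x, hφ.eq_iff]

theorem Equiv.Perm.dvd_card_of_forall_minimalPeriod_eq {α : Type*} [Finite α] (σ : Perm α)
    {n : ℕ} (h : ∀ x, minimalPeriod σ x = n) : n ∣ Nat.card α := by
  have e : α ≃ orbitRel.Quotient (zpowers σ) α × ZMod n :=
    (selfEquivSigmaOrbits (zpowers σ) α).trans <|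
      (Equiv.sigmaCongrRight fun q : orbitRel.Quotient (zpowers σ) α =>
        (orbitZPowersEquiv σ q.out).trans (Equiv.cast (congrArg ZMod (h q.out)))).trans
        (Equiv.sigmaEquivProd _ _)
  rw [Nat.card_congr e, Nat.card_prod, Nat.card_zmod]
  exact dvd_mul_left _ _

section PowMap

variable {G : Type*} [Group G]

theorem zpow_eq_self_iff_intCast_zmod_eq_one {g : G} {m : ℤ} :
    g ^ m = g ↔ (m : ZMod (orderOf g)) = 1 := by
  nth_rw 2 [← zpow_one g]
  rw [zpow_eq_zpow_iff_modEq, ← ZMod.intCast_eq_intCast_iff, Int.cast_one]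

theorem isPeriodicPt_zpow_iff (a : ℤ) (g : G) (k : ℕ) :
    IsPeriodicPt (· ^ a) k g ↔ orderOf (a : ZMod (orderOf g)) ∣ k := by
  rw [IsPeriodicPt, IsFixedPt, zpow_iterate, zpow_eq_self_iff_intCast_zmod_eq_one, Int.cast_pow,
    orderOf_dvd_iff_pow_eq_one]

theorem minimalPeriod_zpow (a : ℤ) (g : G) :
    minimalPeriod (· ^ a) g = orderOf (a : ZMod (orderOf g)) :=
  Nat.dvd_right_iff_eq.mp fun k => by
    rw [← isPeriodicPt_iff_minimalPeriod_dvd, isPeriodicPt_zpow_iff]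

theorem orderOf_zpow_of_isCoprime {g : G} {a : ℤ} (h : IsCoprime a (orderOf g)) :
    orderOf (g ^ a) = orderOf g := by
  obtain ⟨u, v, huv⟩ := h
  have hg : (g ^ a) ^ u = g := by
    rw [← zpow_mul, zpow_eq_self_iff_intCast_zmod_eq_one, ← Int.cast_one,
      ZMod.intCast_eq_intCast_iff, Int.modEq_iff_dvd]
    exact ⟨v, by linear_combination -huv⟩
  refine Nat.dvd_antisymm (orderOf_dvd_of_mem_zpowers (zpow_mem_zpowers g a)) ?_
  conv_lhs => rw [← hg]
  exact orderOf_dvd_of_mem_zpowers (zpow_mem_zpowers _ u)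

end PowMap

theorem powMap_restrict_cycles_general (G : Type*) [Group G] [Fintype G] (a : ℤ)
    (ha : Int.gcd a (Fintype.card G) = 1) (d : ℕ) :
    (∀ g : G, orderOf g = d → orderOf (g ^ a) = d) ∧
    ∀ σ : Equiv.Perm {g : G // orderOf g = d}, (∀ x, (σ x : G) = (x : G) ^ a) →
      (∀ x, Function.minimalPeriod σ x = orderOf ((a : ZMod d))) ∧
      orderOf ((a : ZMod d)) ∣ Nat.card {g : G // orderOf g = d} := by
  have hcop (g : G) : IsCoprime a (orderOf g) :=
    (Int.isCoprime_iff_gcd_eq_one.mpr ha).of_isCoprime_of_dvd_right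
      (Int.natCast_dvd_natCast.mpr orderOf_dvd_card)
  refine ⟨fun g hg => hg ▸ orderOf_zpow_of_isCoprime (hcop g), fun σ hσ => ?_⟩
  have hperiod (x : {g : G // orderOf g = d}) : minimalPeriod σ x = orderOf (a : ZMod d) := by
    rw [Semiconj.minimalPeriod_eq_of_injective (g := (· ^ a)) hσ Subtype.val_injective,
      minimalPeriod_zpow, x.2]
  exact ⟨hperiod, σ.dvd_card_of_forall_minimalPeriod_eq hperiod⟩

/-- For `a` coprime to `|G|` and `d ∣ |G|`, the set of elements of order `d` is invariant
under `ρ_a : g ↦ g ^ a`, and `ρ_a` restricted to this set is a product of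
`G(d)/o_d(a)` disjoint cycles, each of length `o_d(a)` (every point lies on a cycle of
length `o_d(a)`, the multiplicative order of `a` mod `d`, which divides `G(d)`). -/
theorem powMap_restrict_cycles (G : Type*) [Group G] [Fintype G] (a : ℤ)
    (ha : Int.gcd a (Fintype.card G) = 1) (d : ℕ) (hd : d ∣ Fintype.card G) :
    (∀ g : G, orderOf g = d → orderOf (g ^ a) = d) ∧
    ∀ σ : Equiv.Perm {g : G // orderOf g = d}, (∀ x, (σ x : G) = (x : G) ^ a) →
      (∀ x, Function.minimalPeriod σ x = orderOf ((a : ZMod d))) ∧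
      orderOf ((a : ZMod d)) ∣ Nat.card {g : G // orderOf g = d} :=
  powMap_restrict_cycles_general G a ha d
end

section
/- Every finite group G can be written as the symmetric difference of finitely many of its cyclic subgroups, i.e., there exist cyclic subgroups C₁, …, C_t of G with G = C₁ Δ C₂ Δ ⋯ Δ C_t (viewing the subgroups as subsets of G). -/
open Classical in
noncomputable def mfun (G : Type*) [Group G] [Finite G] : Subgroup G → ZMod 2 :=
  fun C =>
    letI := Fintype.ofFinite (Subgroup G)
    1 + ∑ C' ∈ (Finset.univ.filter (fun C' : Subgroup G => C < C' ∧ IsCyclic C')).attach,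
      mfun G C'.1
termination_by C => ((C : Set G)ᶜ).ncard
decreasing_by
  rename_i C
  have h := C'.2
  simp only [Finset.mem_filter] at h
  have hs : (C : Set G) < (C'.1 : Set G) := SetLike.coe_ssubset_coe.mpr h.2.1
  exact Set.ncard_lt_ncard (compl_lt_compl_iff_lt.mpr hs) (Set.toFinite _)

open Classical in
lemma mfun_eq (G : Type*) [Group G] [Finite G] (C : Subgroup G) :
    letI := Fintype.ofFinite (Subgroup G)
    mfun G C = 1 + ∑ C' ∈ Finset.univ.filter (fun C' : Subgroup G => C < C' ∧ IsCyclic C'),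
      mfun G C' := by
  rw [mfun]
  congr 1
  exact Finset.sum_attach _ _

open Classical in
lemma mfun_key (G : Type*) [Group G] [Finite G] (K : Subgroup G) (hK : IsCyclic K) :
    letI := Fintype.ofFinite (Subgroup G)
    ∑ C ∈ Finset.univ.filter (fun C : Subgroup G => K ≤ C ∧ IsCyclic C), mfun G C = 1 := by
  letI := Fintype.ofFinite (Subgroup G)
  have hset : Finset.univ.filter (fun C : Subgroup G => K ≤ C ∧ IsCyclic C)
      = insert K (Finset.univ.filter (fun C : Subgroup G => K < C ∧ IsCyclic C)) := by
    ext C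
    simp only [Finset.mem_filter, Finset.mem_insert, Finset.mem_univ, true_and]
    constructor
    · rintro ⟨hle, hc⟩
      rcases hle.lt_or_eq with h | h
      · exact Or.inr ⟨h, hc⟩
      · exact Or.inl h.symm
    · rintro (rfl | ⟨h, hc⟩)
      · exact ⟨le_rfl, hK⟩
      · exact ⟨h.le, hc⟩
  rw [hset, Finset.sum_insert (by simp), mfun_eq]
  rw [add_assoc]
  simp [show ∀ x : ZMod 2, x + x = 0 from by decide]

/-- Every finite group is the symmetric difference of finitely many of its cyclic subgroups:
an element belongs to the symmetric difference of a family iff it belongs to an odd number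
of its members. -/
theorem exists_cyclic_symmDiff_decomposition (G : Type*) [Group G] [Finite G] :
    ∃ (t : ℕ) (C : Fin t → Subgroup G), (∀ i, IsCyclic ↥(C i)) ∧
      ∀ g : G, Odd (Nat.card {i : Fin t // g ∈ C i}) := by
  classical
  have hcyc : ∀ g : G, IsCyclic (Subgroup.zpowers g) := by
    intro g
    constructor
    refine ⟨⟨g, Subgroup.mem_zpowers g⟩, ?_⟩
    rintro ⟨x, hx⟩
    obtain ⟨k, rfl⟩ := Subgroup.mem_zpowers_iff.mp hx
    exact ⟨k, by ext; simp⟩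
  letI : Fintype (Subgroup G) := Fintype.ofFinite (Subgroup G)
  set F : Finset (Subgroup G) :=
    Finset.univ.filter (fun C : Subgroup G => IsCyclic C ∧ mfun G C = 1) with hF
  refine ⟨F.card, fun i => (F.equivFin.symm i : Subgroup G), ?_, ?_⟩
  · intro i
    exact ((Finset.mem_filter.mp (F.equivFin.symm i).2).2).1
  · intro g
    have hcard : Nat.card {i : Fin F.card // g ∈ (F.equivFin.symm i : Subgroup G)}
        = Nat.card {x : {x // x ∈ F} // g ∈ (x : Subgroup G)} :=
      Nat.card_congr (Equiv.subtypeEquiv F.equivFin.symm (fun i => Iff.rfl))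
    rw [hcard, Nat.card_eq_fintype_card, Fintype.card_subtype]
    rw [Nat.odd_iff]
    set n := (Finset.univ.filter fun x : {x // x ∈ F} => g ∈ (x : Subgroup G)).card with hn
    have hcast : (n : ZMod 2) = 1 := by
      rw [hn, Finset.card_filter, Nat.cast_sum]
      push_cast
      have huniv : (Finset.univ : Finset {x // x ∈ F}) = F.attach := rfl
      rw [huniv, Finset.sum_attach F (fun C' => if g ∈ C' then (1 : ZMod 2) else 0)]
      have h1 : ∀ C' ∈ F, (if g ∈ C' then (1 : ZMod 2) else 0)
          = (if g ∈ C' then mfun G C' else 0) := by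
        intro C' hC'
        rw [hF, Finset.mem_filter] at hC'
        rw [hC'.2.2]
      rw [Finset.sum_congr rfl h1, ← Finset.sum_filter]
      have hkey := mfun_key G (Subgroup.zpowers g) (hcyc g)
      rw [← hkey]
      set S := Finset.univ.filter
        (fun C : Subgroup G => Subgroup.zpowers g ≤ C ∧ IsCyclic C) with hS
      have hsplit := Finset.sum_filter_add_sum_filter_not S
        (fun C => mfun G C = 1) (fun C => mfun G C)
      have hzero : ∑ C ∈ S.filter (fun C => ¬ mfun G C = 1), mfun G C = 0 := by
        refine Finset.sum_eq_zero ?_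
        intro C hC
        have : ∀ x : ZMod 2, x ≠ 1 → x = 0 := by decide
        exact this _ (Finset.mem_filter.mp hC).2
      rw [← hsplit, hzero, add_zero]
      congr 1
      ext C
      simp only [hF, hS, Finset.mem_filter, Finset.mem_univ, true_and,
        Subgroup.zpowers_le]
      tauto
    rcases Nat.mod_two_eq_zero_or_one n with h | h
    · exfalso
      have h0 : (n : ZMod 2) = 0 := by
        rw [← ZMod.natCast_mod, h]
        simp
      rw [h0] at hcast
      exact absurd hcast (by decide)
    · exact h
end

section
/- Every finite group G admits a unique reduced cyclic decomposition: there is a unique finite set {C₁, …, C_t} of pairwise distinct cyclic subgroups of G such that G equals their symmetric difference as subsets. -/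
section aux

variable {G : Type*} [Group G]

lemma isCyclic_zpowers (g : G) : IsCyclic ↥(Subgroup.zpowers g) := by
  refine ⟨⟨⟨g, Subgroup.mem_zpowers g⟩, ?_⟩⟩
  rintro ⟨x, hx⟩
  obtain ⟨n, hn⟩ := Subgroup.mem_zpowers_iff.mp hx
  exact ⟨n, Subtype.ext (by simpa using hn)⟩

lemma eq_zpowers_of_isCyclic (C : Subgroup G) (h : IsCyclic ↥C) :
    ∃ g : G, C = Subgroup.zpowers g := by
  obtain ⟨⟨x, hx⟩, hgen⟩ := h.exists_generator
  refine ⟨x, le_antisymm (fun y hy => ?_) ((Subgroup.zpowers_le).2 hx)⟩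
  obtain ⟨n, hn⟩ := hgen ⟨y, hy⟩
  exact ⟨n, congrArg Subtype.val hn⟩

variable [Finite G]

/-- The canonical predicate: `redP D` iff `D` is cyclic and the number of subgroups
`C > D` with `redP C` is even. Defined by well-founded recursion on `>`. -/
noncomputable def redP : Subgroup G → Prop :=
  (Finite.to_wellFoundedGT (α := Subgroup G)).wf.fix
    (fun D ih => IsCyclic ↥D ∧ Even (Nat.card {C : Subgroup G // ∃ h : D < C, ih C h}))

lemma redP_iff (D : Subgroup G) :
    redP D ↔ IsCyclic ↥D ∧ Even (Nat.card {C : Subgroup G // D < C ∧ redP C}) := by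
  unfold redP
  rw [WellFounded.fix_eq]
  simp only [exists_prop]

/-- Counting with one more element when the predicate holds at `D`. -/
lemma card_le_of_holds (D : Subgroup G) (Q : Subgroup G → Prop) (hD : Q D) :
    Nat.card {C : Subgroup G // D ≤ C ∧ Q C}
      = Nat.card {C : Subgroup G // D < C ∧ Q C} + 1 := by
  have h1 : {C : Subgroup G | D ≤ C ∧ Q C} = insert D {C : Subgroup G | D < C ∧ Q C} := by
    ext C
    simp only [Set.mem_setOf_eq, Set.mem_insert_iff]
    constructor
    · rintro ⟨hle, hQ⟩
      rcases eq_or_lt_of_le hle with h | h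
      · exact Or.inl h.symm
      · exact Or.inr ⟨h, hQ⟩
    · rintro (rfl | ⟨hlt, hQ⟩)
      · exact ⟨le_rfl, hD⟩
      · exact ⟨hlt.le, hQ⟩
  have h2 : D ∉ {C : Subgroup G | D < C ∧ Q C} := fun h => lt_irrefl D h.1
  calc Nat.card {C : Subgroup G // D ≤ C ∧ Q C}
      = {C : Subgroup G | D ≤ C ∧ Q C}.ncard := Nat.card_coe_set_eq _
    _ = {C : Subgroup G | D < C ∧ Q C}.ncard + 1 := by
        rw [h1, Set.ncard_insert_of_notMem h2 (Set.toFinite _)]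
    _ = Nat.card {C : Subgroup G // D < C ∧ Q C} + 1 := by
        rw [← Nat.card_coe_set_eq {C : Subgroup G | D < C ∧ Q C}]
        rfl

lemma card_le_of_not_holds (D : Subgroup G) (Q : Subgroup G → Prop) (hD : ¬ Q D) :
    Nat.card {C : Subgroup G // D ≤ C ∧ Q C}
      = Nat.card {C : Subgroup G // D < C ∧ Q C} := by
  refine Nat.card_congr (Equiv.subtypeEquivRight fun C => ?_)
  constructor
  · rintro ⟨hle, hQ⟩
    rcases eq_or_lt_of_le hle with h | h
    · exact absurd (h ▸ hQ) hD
    · exact ⟨h, hQ⟩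
  · rintro ⟨hlt, hQ⟩
    exact ⟨hlt.le, hQ⟩

/-- If `D` is cyclic, then the number of `C ≥ D` with `redP C` is odd. -/
lemma odd_card_redP (D : Subgroup G) (hD : IsCyclic ↥D) :
    Odd (Nat.card {C : Subgroup G // D ≤ C ∧ redP C}) := by
  by_cases hp : redP D
  · rw [card_le_of_holds D redP hp]
    exact (((redP_iff D).mp hp).2).add_one
  · rw [card_le_of_not_holds D redP hp]
    have : ¬ Even (Nat.card {C : Subgroup G // D < C ∧ redP C}) :=
      fun he => hp ((redP_iff D).mpr ⟨hD, he⟩)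
    exact Nat.not_even_iff_odd.mp this

end aux

/-- Every finite group admits a unique reduced cyclic decomposition: a unique finite set of
pairwise distinct cyclic subgroups whose symmetric difference (membership in an odd number
of them) is all of `G`. -/
theorem existsUnique_reduced_cyclic_decomposition (G : Type*) [Group G] [Finite G] :
    ∃! S : Finset (Subgroup G), (∀ C ∈ S, IsCyclic ↥C) ∧
      ∀ g : G, Odd (Nat.card {C : Subgroup G // C ∈ S ∧ g ∈ C}) := by
  classical
  have : Fintype (Subgroup G) := Fintype.ofFinite _
  refine ⟨Finset.univ.filter (fun C => redP C), ⟨?_, ?_⟩, ?_⟩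
  · intro C hC
    exact ((redP_iff C).mp (Finset.mem_filter.mp hC).2).1
  · intro g
    have h1 : Nat.card {C : Subgroup G // C ∈ Finset.univ.filter (fun C => redP C) ∧ g ∈ C}
        = Nat.card {C : Subgroup G // Subgroup.zpowers g ≤ C ∧ redP C} := by
      refine Nat.card_congr (Equiv.subtypeEquivRight fun C => ?_)
      simp [Finset.mem_filter, Subgroup.zpowers_le, and_comm]
    rw [h1]
    exact odd_card_redP _ (isCyclic_zpowers g)
  · intro S ⟨hcyc, hodd⟩
    have key : ∀ C : Subgroup G, C ∈ S ↔ redP C := by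
      intro C
      induction C using ((Finite.to_wellFoundedGT (α := Subgroup G)).wf).induction with
      | _ C ih =>
        have hcard : ∀ g : G, C = Subgroup.zpowers g →
            Nat.card {C' : Subgroup G // C' ∈ S ∧ g ∈ C'}
              = Nat.card {C' : Subgroup G // C ≤ C' ∧ C' ∈ S} := by
          intro g hg
          refine Nat.card_congr (Equiv.subtypeEquivRight fun C' => ?_)
          rw [hg, Subgroup.zpowers_le, and_comm]
        have hC_count : Nat.card {C' : Subgroup G // C < C' ∧ C' ∈ S}
            = Nat.card {C' : Subgroup G // C < C' ∧ redP C'} := by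
          refine Nat.card_congr (Equiv.subtypeEquivRight fun C' => ?_)
          exact and_congr_right fun h => ih C' h
        constructor
        · intro hCS
          obtain ⟨g, hg⟩ := eq_zpowers_of_isCyclic C (hcyc C hCS)
          have hoddg := hodd g
          rw [hcard g hg, card_le_of_holds C (· ∈ S) hCS] at hoddg
          have heven : Even (Nat.card {C' : Subgroup G // C < C' ∧ C' ∈ S}) := by
            rcases Nat.even_or_odd (Nat.card {C' : Subgroup G // C < C' ∧ C' ∈ S}) with h | h
            · exact h
            · exact absurd hoddg (by simpa using h.add_one)
          exact (redP_iff C).mpr ⟨hcyc C hCS, hC_count ▸ heven⟩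
        · intro hp
          obtain ⟨hCcyc, heven⟩ := (redP_iff C).mp hp
          obtain ⟨g, hg⟩ := eq_zpowers_of_isCyclic C hCcyc
          by_contra hCS
          have hoddg := hodd g
          rw [hcard g hg, card_le_of_not_holds C (· ∈ S) hCS, hC_count] at hoddg
          exact (Nat.not_even_iff_odd.mpr hoddg) heven
    ext C
    simp [Finset.mem_filter, key C]
end

section
/- Let G be a nontrivial finite 2-group and let G = Δᵢ Cᵢ be its reduced cyclic decomposition (pairwise distinct cyclic subgroups). Then none of the Cᵢ is the trivial subgroup. -/
/-!
Count modulo 2 the pairs `(C, g)` with `C ∈ S` and `g ∈ C` an involution. Each involution lies in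
an odd number of members of `S`, and a nontrivial finite 2-group has an odd number of involutions,
so the count is odd. On the other hand a nontrivial cyclic 2-group contains exactly one involution
and `⊥` contains none, while `#S` is odd because every member of `S` contains `1`. So if `⊥ ∈ S`,
the count is `#S - 1`, which is even.
-/

open Finset

section

variable {G : Type*} [Group G] [Fintype G]

theorem card_modEq_card_filter_sq_eq_one [DecidableEq G] :
    Fintype.card G ≡ #{g : G | g ^ 2 = 1} [MOD 2] := by
  let inv : Function.End G := Inv.inv
  have hinv : inv ^ 2 ^ 1 = 1 := funext inv_inv
  convert Equiv.Perm.card_fixedPoints_modEq hinv using 1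
  rw [← Set.toFinset_card]
  congr 1
  ext g
  simp [inv, Function.IsFixedPt, inv_eq_iff_mul_eq_one, sq]

theorem odd_card_filter_orderOf_eq_two [DecidableEq G] (h2 : 2 ∣ Fintype.card G) :
    Odd #{g : G | orderOf g = 2} := by
  have hsplit : univ.filter (fun g : G => g ^ 2 = 1) =
      insert 1 (univ.filter fun g : G => orderOf g = 2) := by
    ext g
    simp only [mem_filter, mem_univ, true_and, mem_insert, ← orderOf_dvd_iff_pow_eq_one,
      Nat.dvd_prime Nat.prime_two, orderOf_eq_one_iff]
  have hcard := (Nat.modEq_zero_iff_dvd.mpr h2).symm.trans card_modEq_card_filter_sq_eq_one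
  rw [hsplit, card_insert_of_notMem (by simp)] at hcard
  rw [Nat.odd_iff]
  unfold Nat.ModEq at hcard
  omega

theorem Subgroup.card_orderOf_eq_totient_of_isCyclic (C : Subgroup G) [IsCyclic C]
    [DecidablePred (· ∈ C)] {d : ℕ} (hd : d ∣ Nat.card C) :
    #{g : G | orderOf g = d ∧ g ∈ C} = d.totient := by
  rw [Nat.card_eq_fintype_card] at hd
  rw [← IsCyclic.card_orderOf_eq_totient hd]
  symm
  refine card_bij (fun a _ => (a : G)) ?_ (fun _ _ _ _ => Subtype.ext) ?_
  · intro a ha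
    simpa [Subgroup.orderOf_coe] using ha
  · intro g hg
    simp only [mem_filter, mem_univ, true_and] at hg
    exact ⟨⟨g, hg.2⟩, by simpa [Subgroup.orderOf_mk] using hg.1, rfl⟩

theorem IsPGroup.dvd_card_of_nontrivial {p : ℕ} [Fact p.Prime] [Nontrivial G]
    (hG : IsPGroup p G) : p ∣ Nat.card G :=
  hG.card_eq_or_dvd.resolve_left Finite.one_lt_card.ne'

theorem IsPGroup.card_orderOf_eq_two_of_isCyclic (hG : IsPGroup 2 G) {C : Subgroup G}
    [IsCyclic C] [DecidablePred (· ∈ C)] (hC : C ≠ ⊥) :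
    #{g : G | orderOf g = 2 ∧ g ∈ C} = 1 := by
  have : Nontrivial C := (Subgroup.nontrivial_iff_ne_bot C).mpr hC
  rw [C.card_orderOf_eq_totient_of_isCyclic (hG.to_subgroup C).dvd_card_of_nontrivial,
    Nat.totient_two]

end

/-- In the reduced cyclic decomposition of a nontrivial finite 2-group, none of the cyclic
subgroups is trivial. -/
theorem reduced_decomposition_no_trivial_subgroup (G : Type*) [Group G] [Fintype G]
    [Nontrivial G] (hG : IsPGroup 2 G) (S : Finset (Subgroup G))
    (hcyc : ∀ C ∈ S, IsCyclic ↥C)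
    (hdec : ∀ g : G, Odd (Nat.card {C : Subgroup G // C ∈ S ∧ g ∈ C})) :
    ⊥ ∉ S := by
  classical
  intro hbot
  set I : Finset G := {g | orderOf g = 2}
  have hrow (g : G) : Odd #{C ∈ S | g ∈ C} := by
    simpa only [← Nat.card_eq_finsetCard, mem_filter] using hdec g
  have hS : Odd #S := by simpa using hrow 1
  have hcol : ∀ C ∈ S.erase ⊥, #(I.bipartiteAbove (fun C g => g ∈ C) C) = 1 := fun C hC => by
    have := hcyc C (mem_of_mem_erase hC)
    rw [bipartiteAbove, filter_filter]
    exact hG.card_orderOf_eq_two_of_isCyclic (ne_of_mem_erase hC)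
  have hbot_col : #(I.bipartiteAbove (fun C g => g ∈ C) (⊥ : Subgroup G)) = 0 := by
    rw [bipartiteAbove, card_eq_zero, filter_eq_empty_iff]
    rintro g hg rfl
    simp [I] at hg
  have hcount := sum_card_bipartiteAbove_eq_sum_card_bipartiteBelow (s := S) (t := I)
    (fun C g => g ∈ C)
  have hsubgroups : Even (∑ C ∈ S, #(I.bipartiteAbove (fun C g => g ∈ C) C)) := by
    rw [← add_sum_erase S _ hbot, hbot_col, zero_add, sum_congr rfl hcol, ← card_eq_sum_ones,
      card_erase_of_mem hbot]
    exact Nat.Odd.sub_odd hS odd_one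
  have hinvolutions : Odd (∑ g ∈ I, #(S.bipartiteBelow (fun C g => g ∈ C) g)) := by
    simp only [odd_sum_iff_odd_card_odd, bipartiteBelow]
    rw [filter_true_of_mem fun g _ => hrow g]
    exact odd_card_filter_orderOf_eq_two
      (Nat.card_eq_fintype_card (α := G) ▸ hG.dvd_card_of_nontrivial)
  exact Nat.not_even_iff_odd.mpr hinvolutions (hcount ▸ hsubgroups)
end

section
/- Let G = H × K with gcd(|H|, |K|) = 1. If H = Δᵢ ⟨hᵢ⟩ and K = Δⱼ ⟨kⱼ⟩ are symmetric-difference decompositions into cyclic subgroups, then G = Δ_{i,j} ⟨(hᵢ, kⱼ)⟩. -/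
lemma mem_zpowers_prod_iff {H K : Type*} [Group H] [Group K] {a : H} {b : K}
    (hab : Nat.Coprime (orderOf a) (orderOf b)) (ha : 0 < orderOf a) (hb : 0 < orderOf b)
    (z : H × K) :
    z ∈ Subgroup.zpowers (a, b) ↔ z.1 ∈ Subgroup.zpowers a ∧ z.2 ∈ Subgroup.zpowers b := by
  constructor
  · rintro ⟨c, rfl⟩
    exact ⟨⟨c, rfl⟩, ⟨c, rfl⟩⟩
  · rintro ⟨⟨s, hs⟩, ⟨t, ht⟩⟩
    set o1 := orderOf a
    set o2 := orderOf b
    set s' : ℕ := (s % (o1 : ℤ)).toNat with hs'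
    set t' : ℕ := (t % (o2 : ℤ)).toNat with ht'
    obtain ⟨c, hc1, hc2⟩ := Nat.chineseRemainder hab s' t'
    refine ⟨(c : ℤ), ?_⟩
    have h1 : a ^ (c : ℤ) = z.1 := by
      rw [← hs, zpow_natCast]
      rw [show a ^ (c : ℕ) = a ^ s' from (pow_eq_pow_iff_modEq).2 hc1]
      rw [← zpow_natCast]
      apply (zpow_eq_zpow_iff_modEq).2
      have : ((s % (o1 : ℤ)).toNat : ℤ) = s % (o1 : ℤ) :=
        Int.toNat_of_nonneg (Int.emod_nonneg s (by exact_mod_cast ha.ne'))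
      calc ((s' : ℤ)) = s % (o1 : ℤ) := this
        _ ≡ s [ZMOD o1] := (Int.emod_emod_of_dvd s dvd_rfl)
    have h2 : b ^ (c : ℤ) = z.2 := by
      rw [← ht, zpow_natCast]
      rw [show b ^ (c : ℕ) = b ^ t' from (pow_eq_pow_iff_modEq).2 hc2]
      rw [← zpow_natCast]
      apply (zpow_eq_zpow_iff_modEq).2
      have : ((t % (o2 : ℤ)).toNat : ℤ) = t % (o2 : ℤ) :=
        Int.toNat_of_nonneg (Int.emod_nonneg t (by exact_mod_cast hb.ne'))
      calc ((t' : ℤ)) = t % (o2 : ℤ) := this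
        _ ≡ t [ZMOD o2] := Int.emod_emod_of_dvd t dvd_rfl
    exact Prod.ext h1 h2

set_option maxHeartbeats 1000000 in
/-- Symmetric-difference decompositions behave well with respect to direct products of
groups of coprime orders. -/
theorem symmDiff_decomposition_prod (H K : Type*) [Group H] [Group K] [Finite H] [Finite K]
    (hco : Nat.Coprime (Nat.card H) (Nat.card K))
    (m n : ℕ) (h : Fin m → H) (k : Fin n → K)
    (hH : ∀ x : H, Odd (Nat.card {i : Fin m // x ∈ Subgroup.zpowers (h i)}))
    (hK : ∀ y : K, Odd (Nat.card {j : Fin n // y ∈ Subgroup.zpowers (k j)})) :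
    ∀ z : H × K,
      Odd (Nat.card {p : Fin m × Fin n // z ∈ Subgroup.zpowers (h p.1, k p.2)}) := by
  intro z
  have key : ∀ p : Fin m × Fin n,
      z ∈ Subgroup.zpowers (h p.1, k p.2) ↔
        z.1 ∈ Subgroup.zpowers (h p.1) ∧ z.2 ∈ Subgroup.zpowers (k p.2) := by
    intro p
    refine mem_zpowers_prod_iff ?_ (orderOf_pos _) (orderOf_pos _) z
    exact Nat.Coprime.coprime_dvd_right (orderOf_dvd_natCard _)
      (Nat.Coprime.coprime_dvd_left (orderOf_dvd_natCard _) hco)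
  have e : {p : Fin m × Fin n // z ∈ Subgroup.zpowers (h p.1, k p.2)} ≃
      {i : Fin m // z.1 ∈ Subgroup.zpowers (h i)} × {j : Fin n // z.2 ∈ Subgroup.zpowers (k j)} :=
    (Equiv.subtypeEquivRight key).trans
      (Equiv.subtypeProdEquivProd (p := fun i : Fin m => z.1 ∈ Subgroup.zpowers (h i))
        (q := fun j : Fin n => z.2 ∈ Subgroup.zpowers (k j)))
  rw [Nat.card_congr e, Nat.card_prod]
  exact (hH z.1).mul (hK z.2)
end

section
/- Let G be a finite 2-group of order 2^n with n ≥ 3, and let p be an odd prime. Then the sign of the permutation g ↦ g^p of G equals (-1/p)^{G(4)/2}, where G(4) is the number of elements of order 4 in G and (-1/p) is the Legendre symbol. -/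
/-!
The power map `g ↦ g ^ p` preserves orders, so its sign is the product of its signs on the sets
of elements of order `d = 2 ^ k`. On such a set every point has exact period `o`, the order of
`p` in `(ZMod d)ˣ`, so the sign there is `1` if `o` is odd and `(-1) ^ (N_d / o)` otherwise,
where `N_d` counts the elements of order `d`. For `k ≤ 1` we have `o = 1`. For `k ≥ 3`, `o`
divides the Carmichael exponent `λ(2 ^ k) = φ(2 ^ k) / 2`, while `φ(d)` divides `N_d` because the
elements of order `d` split into the generator sets of cyclic subgroups; hence `N_d / o` is even.
Only `d = 4` remains: there `o = 2` exactly when `p ≡ 3 (mod 4)`, which gives `(-1/p) ^ (N_4 / 2)`.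
-/

open Finset

namespace Equiv.Perm

variable {α : Type*} [Fintype α] [DecidableEq α]

theorem sign_sigmaCongrRight {ι : Type*} [Fintype ι] [DecidableEq ι] {β : ι → Type*}
    [∀ i, Fintype (β i)] [∀ i, DecidableEq (β i)] (F : ∀ i, Perm (β i)) :
    sign (sigmaCongrRight F) = ∏ i, sign (F i) := by
  suffices h : sign.comp (sigmaCongrRightHom β) = ∏ i, sign.comp (Pi.evalMonoidHom _ i) by
    simpa using DFunLike.congr_fun h F
  refine MonoidHom.pi_ext fun i τ => ?_
  have hsingle : sigmaCongrRight (Pi.mulSingle i τ) =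
      τ.extendDomain (sigmaSubtype i).symm := by
    refine ext fun ⟨j, x⟩ => ?_
    rcases eq_or_ne j i with rfl | hj
    · rw [extendDomain_apply_subtype _ _ (p := fun s : Sigma β => s.1 = j) rfl]
      simp [sigmaSubtype]
    · rw [extendDomain_apply_not_subtype _ _ (p := fun s : Sigma β => s.1 = i) hj]
      simp [Pi.mulSingle_eq_of_ne hj]
  simp [sigmaCongrRightHom, hsingle, Pi.apply_mulSingle (fun _ => sign) (fun _ => map_one _)]

theorem sign_eq_prod_sign_subtypePerm {ι : Type*} [DecidableEq ι] (σ : Perm α) (f : α → ι)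
    (hf : ∀ a, f (σ a) = f a) (s : Finset ι) (hs : ∀ a, f a ∈ s) :
    sign σ = ∏ i ∈ s, sign (σ.subtypePerm (p := fun a => f a = i) fun a => by rw [hf]) := by
  rw [← prod_coe_sort, ← sign_sigmaCongrRight]
  refine sign_eq_sign_of_equiv _ _ (sigmaSubtypeFiberEquiv f (· ∈ s) hs).symm fun a => ?_
  apply Sigma.subtype_ext
  · simp [sigmaSubtypeFiberEquiv, sigmaSubtypeEquivOfSubset, subtypeSigmaEquiv, hf]
  · rfl

theorem cycleType_eq_replicate_of_pow_apply_eq_self_iff {τ : Perm α} {o : ℕ}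
    (h : ∀ x (j : ℕ), (τ ^ j) x = x ↔ o ∣ j) :
    τ.cycleType = Multiset.replicate τ.cycleType.card o := by
  refine Multiset.eq_replicate_card.2 fun c hc => ?_
  rw [cycleType_def, Multiset.mem_map] at hc
  obtain ⟨c, hc, rfl⟩ := hc
  have hc : c ∈ τ.cycleFactorsFinset := hc
  have hcycle := (mem_cycleFactorsFinset_iff.1 hc).1
  obtain ⟨x, hx⟩ := hcycle.nonempty_support
  refine Nat.dvd_right_iff_eq.1 fun j => ?_
  rw [Function.comp_apply, ← hcycle.orderOf, orderOf_dvd_iff_pow_eq_one,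
    hcycle.pow_eq_one_iff' (mem_support.1 hx), cycle_is_cycleOf hx hc, cycleOf_pow_apply_self, h]

theorem sign_of_pow_apply_eq_self_iff {τ : Perm α} {o : ℕ}
    (h : ∀ x (j : ℕ), (τ ^ j) x = x ↔ o ∣ j) :
    sign τ = if Odd o then 1 else (-1) ^ (Fintype.card α / o) := by
  have hrep := cycleType_eq_replicate_of_pow_apply_eq_self_iff h
  rcases o.eq_zero_or_pos with rfl | ho
  · have : τ.cycleType = 0 := Multiset.eq_zero_of_forall_notMem fun c hc => by
      have h2 := two_le_of_mem_cycleType hc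
      rw [hrep, Multiset.mem_replicate] at hc
      omega
    simp [cycleType_eq_zero.1 this]
  rw [sign_of_cycleType_eq_replicate ho hrep]
  split_ifs with hodd
  · rfl
  · have : IsEmpty (Function.fixedPoints τ) := ⟨fun ⟨x, hx⟩ => hodd <| by
      rw [Nat.dvd_one.1 ((h x 1).1 (by rwa [pow_one]))]
      exact odd_one⟩
    rw [Fintype.card_eq_zero (α := Function.fixedPoints τ), Nat.sub_zero]

end Equiv.Perm

open Equiv Equiv.Perm Subgroup ArithmeticFunction

section Group

variable {G : Type*} [Group G]

theorem pow_eq_self_iff_natCast_eq_one (x : G) (m : ℕ) :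
    x ^ m = x ↔ (m : ZMod (orderOf x)) = 1 := by
  rw [← Nat.cast_one, ZMod.natCast_eq_natCast_iff, ← pow_eq_pow_iff_modEq, pow_one]

theorem orderOf_eq_of_zpowers_eq {x g : G} (h : zpowers x = zpowers g) :
    orderOf x = orderOf g := by
  rw [← Nat.card_zpowers, h, Nat.card_zpowers]

theorem zpowers_eq_zpowers_iff_mem_and_orderOf_eq [Finite G] {x g : G} :
    zpowers x = zpowers g ↔ x ∈ zpowers g ∧ orderOf x = orderOf g := by
  refine ⟨fun h => ⟨h ▸ mem_zpowers x, orderOf_eq_of_zpowers_eq h⟩, fun ⟨hx, hord⟩ => ?_⟩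
  refine eq_of_le_of_card_ge (zpowers_le.2 hx) ?_
  rw [Nat.card_zpowers, Nat.card_zpowers, hord]

variable [Finite G]

theorem card_zpowers_eq_zpowers (g : G) :
    Nat.card {x : G // zpowers x = zpowers g} = (orderOf g).totient := by
  classical
  cases nonempty_fintype G
  calc Nat.card {x : G // zpowers x = zpowers g}
      = Nat.card {a : zpowers g // orderOf a = orderOf g} := Nat.card_congr <|
        (subtypeEquivRight fun x => zpowers_eq_zpowers_iff_mem_and_orderOf_eq).trans
          ((subtypeSubtypeEquivSubtypeInter _ (orderOf · = orderOf g)).symm.trans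
            (subtypeEquivRight fun a => by rw [Subgroup.orderOf_coe]))
    _ = (orderOf g).totient := by
      rw [Nat.card_eq_fintype_card, Fintype.card_subtype,
        IsCyclic.card_orderOf_eq_totient (by rw [Fintype.card_zpowers])]

theorem totient_dvd_card_orderOf_eq (d : ℕ) :
    d.totient ∣ Nat.card {x : G // orderOf x = d} := by
  classical
  cases nonempty_fintype G
  rw [Nat.card_eq_fintype_card, Fintype.card_subtype, card_eq_sum_card_fiberwise
    (f := zpowers) (t := univ.image zpowers) fun x _ => mem_image_of_mem _ (mem_univ x)]
  refine dvd_sum fun H hH => ?_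
  obtain ⟨g, -, rfl⟩ := mem_image.1 hH
  rw [filter_filter]
  by_cases hg : orderOf g = d
  · have hfiber : ∀ x, orderOf x = d ∧ zpowers x = zpowers g ↔ zpowers x = zpowers g :=
      fun x => and_iff_right_of_imp fun h => (orderOf_eq_of_zpowers_eq h).trans hg
    simp_rw [hfiber]
    rw [← Fintype.card_subtype, ← Nat.card_eq_fintype_card, card_zpowers_eq_zpowers, hg]
  · rw [filter_false_of_mem fun x _ h => hg ((orderOf_eq_of_zpowers_eq h.2).symm.trans h.1)]
    simp

end Group

section PowMap

variable {G : Type*} [Group G] [Fintype G] [DecidableEq G] {p : ℕ}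

theorem sign_powMap_orderOf_eq {d : ℕ} (τ : Perm {x : G // orderOf x = d})
    (hτ : ∀ x, (τ x : G) = x ^ p) :
    sign τ = if Odd (orderOf (p : ZMod d)) then 1
      else (-1) ^ (Nat.card {x : G // orderOf x = d} / orderOf (p : ZMod d)) := by
  rw [Nat.card_eq_fintype_card]
  refine sign_of_pow_apply_eq_self_iff fun x j => ?_
  have hpow : ((τ ^ j) x : G) = x ^ p ^ j := by
    induction j with
    | zero => simp
    | succ j ih => rw [pow_succ', mul_apply, hτ, ih, ← pow_mul, pow_succ]
  rw [Subtype.ext_iff, hpow, pow_eq_self_iff_natCast_eq_one, x.2, Nat.cast_pow,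
    orderOf_dvd_iff_pow_eq_one]

theorem orderOf_natCast_dvd_carmichael {d : ℕ} (h : p.Coprime d) :
    orderOf (p : ZMod d) ∣ carmichael d := by
  rw [← ZMod.coe_unitOfCoprime p h, orderOf_units]
  exact orderOf_dvd_of_pow_eq_one (pow_carmichael _)

theorem sign_powMap_orderOf_eq_two_pow (hp : Odd p) {k : ℕ} (hk : k ≠ 2)
    (τ : Perm {x : G // orderOf x = 2 ^ k}) (hτ : ∀ x, (τ x : G) = x ^ p) : sign τ = 1 := by
  set o := orderOf (p : ZMod (2 ^ k))
  have ho : o ∣ 2 ^ (k - 2) := carmichael_two_pow_of_ne_two hk ▸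
    orderOf_natCast_dvd_carmichael (hp.coprime_two_right.pow_right k)
  rw [sign_powMap_orderOf_eq τ hτ]
  split_ifs with hodd
  · rfl
  have hk3 : 3 ≤ k := by
    by_contra! hk3
    rw [show k - 2 = 0 by omega, pow_zero, Nat.dvd_one] at ho
    exact hodd (ho ▸ odd_one : Odd o)
  obtain ⟨m, hm⟩ := ho
  obtain ⟨c, hc⟩ := totient_dvd_card_orderOf_eq (G := G) (2 ^ k)
  rw [← two_mul_carmichael_two_pow_of_three_le_eq_totient hk3, carmichael_two_pow_of_ne_two hk,
    hm] at hc
  have ho0 : 0 < o := Nat.pos_of_ne_zero fun h => by simp [h] at hm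
  rw [hc, show 2 * (o * m) * c = o * (2 * (m * c)) by ring, Nat.mul_div_cancel_left _ ho0]
  exact (even_two_mul _).neg_one_pow

theorem sign_powMap_orderOf_eq_four (hp : Odd p) (τ : Perm {x : G // orderOf x = 4})
    (hτ : ∀ x, (τ x : G) = x ^ p) :
    (sign τ : ℤ) = ZMod.χ₄ p ^ (Nat.card {x : G // orderOf x = 4} / 2) := by
  have h4 : p % 4 = 1 ∨ p % 4 = 3 := by have := Nat.odd_iff.1 hp; omega
  rw [sign_powMap_orderOf_eq τ hτ, ← ZMod.natCast_mod p 4]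
  rcases h4 with h | h <;> rw [h]
  · simp
  · have : orderOf (3 : ZMod 4) = 2 := orderOf_eq_prime (by decide) (by decide)
    simp [this, show ¬Odd 2 by decide, show ZMod.χ₄ 3 = -1 from rfl]

end PowMap

theorem sign_powMap_two_group_general (G : Type*) [Group G] [Fintype G] [DecidableEq G]
    (n : ℕ) (hcard : Fintype.card G = 2 ^ n)
    (p : ℕ) [Fact p.Prime] (hp : p ≠ 2)
    (σ : Equiv.Perm G) (hσ : ∀ g : G, σ g = g ^ p) :
    ((Equiv.Perm.sign σ : ℤˣ) : ℤ) =
      (legendreSym p (-1)) ^ (Nat.card {g : G // orderOf g = 4} / 2) := by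
  have hp_odd : Odd p := (Fact.out : p.Prime).odd_of_ne_two hp
  have horderOf_dvd (g : G) : orderOf g ∣ 2 ^ n := hcard ▸ orderOf_dvd_card
  have hσ_orderOf (g : G) : orderOf (σ g) = orderOf g := by
    rw [hσ]
    exact Nat.Coprime.orderOf_pow
      ((hp_odd.coprime_two_right.pow_right n).coprime_dvd_right (horderOf_dvd g)).symm
  have hmem (d : ℕ) (g : G) (hg : orderOf g = d) : d ∈ (2 ^ n).divisors :=
    Nat.mem_divisors.2 ⟨hg ▸ horderOf_dvd g, by positivity⟩
  rw [sign_eq_prod_sign_subtypePerm σ orderOf hσ_orderOf _ fun g => hmem _ g rfl,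
    Units.coe_prod, legendreSym.at_neg_one hp, prod_eq_single 4 ?_ ?_,
    sign_powMap_orderOf_eq_four hp_odd _ fun x => hσ x]
  · intro d hd hd4
    obtain ⟨k, -, rfl⟩ := (Nat.dvd_prime_pow Nat.prime_two).1 (Nat.dvd_of_mem_divisors hd)
    rw [sign_powMap_orderOf_eq_two_pow hp_odd (by rintro rfl; exact hd4 rfl) _ fun x => hσ x,
      Units.val_one]
  · intro h4
    have : IsEmpty {g : G // orderOf g = 4} := ⟨fun g => h4 (hmem 4 g g.2)⟩
    simp [Subsingleton.elim _ (1 : Perm {g : G // orderOf g = 4})]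

/-- For a finite 2-group `G` of order `2 ^ n` with `n ≥ 3` and an odd prime `p`, the sign
of the permutation `g ↦ g ^ p` of `G` equals `(-1/p)^{G(4)/2}`, where `G(4)` is the number
of elements of order `4`. -/
theorem sign_powMap_two_group (G : Type*) [Group G] [Fintype G] [DecidableEq G]
    (n : ℕ) (hn : 3 ≤ n) (hcard : Fintype.card G = 2 ^ n)
    (p : ℕ) [Fact p.Prime] (hp : p ≠ 2)
    (σ : Equiv.Perm G) (hσ : ∀ g : G, σ g = g ^ p) :
    ((Equiv.Perm.sign σ : ℤˣ) : ℤ) =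
      (legendreSym p (-1)) ^ (Nat.card {g : G // orderOf g = 4} / 2) :=
  sign_powMap_two_group_general G n hcard p hp σ hσ
end

section
/- Let G be a finite group of order 2n with n odd in which every element of even order is an involution. Then the number of Sylow 2-subgroups of G equals n, and |f₂(G)| = n + 1. -/
/-!
Since `n` is odd, a Sylow 2-subgroup `P = ⟨t⟩` has order 2, so its normalizer is the
centralizer of `t`. Every `g` commuting with `t` squares to `1`: otherwise `g` has odd order
`m > 1` and `g t` has order `2m`, an even order that is not 2. So the normalizer is a 2-group
containing `P`, hence equals `P`, and there are `[G : P] = n` Sylow 2-subgroups. Each contains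
exactly one involution and each involution generates one of them, so `G` has `n` involutions,
and `n + 1` solutions of `g ^ 2 = 1`.
-/

open Subgroup

theorem Nat.factorization_two_mul_of_odd {n : ℕ} (hn : Odd n) : (2 * n).factorization 2 = 1 := by
  rw [Nat.factorization_mul two_ne_zero (by rintro rfl; simp at hn), Finsupp.add_apply,
    Nat.prime_two.factorization_self, Nat.factorization_eq_zero_of_not_dvd hn.not_two_dvd_nat]

section Involutions

variable {G : Type*} [Group G] {t g : G}

theorem mem_zpowers_iff_of_orderOf_eq_two (ht : orderOf t = 2) :
    g ∈ zpowers t ↔ g = 1 ∨ g = t := by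
  refine ⟨fun hg => ?_, ?_⟩
  · obtain ⟨k, rfl⟩ := mem_zpowers_iff.mp hg
    rw [← zpow_mod_orderOf, ht]
    rcases Int.emod_two_eq k with h | h <;> simp [h]
  · rintro (rfl | rfl)
    exacts [one_mem _, mem_zpowers _]

theorem commute_of_mem_normalizer_zpowers (ht : orderOf t = 2)
    (hg : g ∈ normalizer (zpowers t : Set G)) : Commute g t := by
  have ht1 : t ≠ 1 := by rintro rfl; simp at ht
  rcases (mem_zpowers_iff_of_orderOf_eq_two ht).mp
      ((mem_normalizer_iff.mp hg t).mp (mem_zpowers t)) with h | h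
  · exact absurd (by simpa using h) ht1
  · exact mul_inv_eq_iff_eq_mul.mp h

theorem sq_eq_one_of_commute_of_orderOf_eq_two
    (hinv : ∀ g : G, Even (orderOf g) → orderOf g = 2) (ht : orderOf t = 2) (hgt : Commute g t) :
    g ^ 2 = 1 := by
  rcases Nat.even_or_odd (orderOf g) with he | ho
  · rw [← hinv g he]
    exact pow_orderOf_eq_one g
  · -- for `g` of odd order, `g * t` has even order `2 * orderOf g`, which must be `2`
    have hgt2 : orderOf (g * t) = orderOf g * 2 := by
      rw [hgt.orderOf_mul_eq_mul_orderOf_of_coprime (ht ▸ ho.coprime_two_right), ht]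
    have : orderOf g = 1 := by
      have := hinv (g * t) (hgt2 ▸ Nat.even_mul.mpr (Or.inr even_two))
      omega
    simp [orderOf_eq_one_iff.mp this]

end Involutions

theorem Subgroup.exists_orderOf_eq_two_of_card_eq_two {G : Type*} [Group G] {H : Subgroup G}
    (hH : Nat.card H = 2) : ∃ t, orderOf t = 2 ∧ H = zpowers t := by
  have : Finite H := Nat.finite_of_card_ne_zero (by omega)
  obtain ⟨t, htH, ht1⟩ := H.bot_or_exists_ne_one.resolve_left (by rintro rfl; simp at hH)
  have ht : orderOf t = 2 :=
    (Nat.dvd_prime Nat.prime_two).mp (hH ▸ H.orderOf_dvd_natCard htH) |>.resolve_left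
      (fun h => ht1 (orderOf_eq_one_iff.mp h))
  refine ⟨t, ht, (eq_of_le_of_card_ge ((zpowers_le).mpr htH) ?_).symm⟩
  rw [hH, Nat.card_zpowers, ht]

theorem card_pow_eq_one_eq_card_orderOf_eq_add_one {G : Type*} [Group G] [Finite G] {p : ℕ}
    [Fact p.Prime] : Nat.card {g : G // g ^ p = 1} = Nat.card {g : G // orderOf g = p} + 1 := by
  have : {g : G | g ^ p = 1} = insert 1 {g : G | orderOf g = p} := by
    ext g
    simp only [Set.mem_ofPred_eq, Set.mem_insert_iff]
    by_cases hg : g = 1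
    · simp [hg]
    · simp [hg, orderOf_eq_prime_iff]
  rw [← Set.coe_ofPred, ← Set.coe_ofPred, Nat.card_coe_set_eq, Nat.card_coe_set_eq, this,
    Set.ncard_insert_of_notMem (by simp [(Fact.out : p.Prime).one_lt.ne])]

namespace Sylow

variable {G : Type*} [Group G]

theorem normalizer_eq_self_of_card_eq_two
    (hinv : ∀ g : G, Even (orderOf g) → orderOf g = 2) (P : Sylow 2 G) (hP : Nat.card P = 2) :
    normalizer (P : Set G) = P := by
  obtain ⟨t, ht, hPt⟩ := exists_orderOf_eq_two_of_card_eq_two hP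
  -- the normalizer centralizes `t`, so all its elements square to `1`: it is a 2-group
  refine P.is_maximal' (fun g => ⟨1, Subtype.ext ?_⟩) le_normalizer
  have hg : (g : G) ∈ normalizer (zpowers t : Set G) := hPt ▸ g.2
  simpa using
    sq_eq_one_of_commute_of_orderOf_eq_two hinv ht (commute_of_mem_normalizer_zpowers ht hg)

theorem card_eq_card_orderOf_eq_two [Finite G] (h2 : (Nat.card G).factorization 2 = 1) :
    Nat.card {t : G // orderOf t = 2} = Nat.card (Sylow 2 G) := by
  refine Nat.card_eq_of_bijective
    (fun t => ofCard (zpowers t.1) (by rw [Nat.card_zpowers, t.2, h2, pow_one])) ⟨?_, ?_⟩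
  · rintro ⟨a, ha⟩ ⟨b, hb⟩ hab
    have hzp : zpowers a = zpowers b := congrArg ((↑) : Sylow 2 G → Subgroup G) hab
    have ha' : a ∈ zpowers b := hzp ▸ mem_zpowers a
    have ha1 : a ≠ 1 := by rintro rfl; simp at ha
    exact Subtype.ext (((mem_zpowers_iff_of_orderOf_eq_two hb).mp ha').resolve_left ha1)
  · intro Q
    obtain ⟨t, ht, hQt⟩ :=
      exists_orderOf_eq_two_of_card_eq_two (by rw [Q.card_eq_multiplicity, h2, pow_one])
    exact ⟨⟨t, ht⟩, Sylow.ext hQt.symm⟩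

end Sylow

/-- If `|G| = 2n` with `n` odd and every element of even order is an involution, then `G`
has exactly `n` Sylow 2-subgroups and `|f₂(G)| = n + 1`. -/
theorem sylow_two_count_of_involutions (G : Type*) [Group G] [Fintype G]
    (n : ℕ) (hn : Odd n) (hcard : Fintype.card G = 2 * n)
    (hinv : ∀ g : G, Even (orderOf g) → orderOf g = 2) :
    Nat.card (Sylow 2 G) = n ∧ Nat.card {g : G // g ^ 2 = 1} = n + 1 := by
  have hG : Nat.card G = 2 * n := by rw [Nat.card_eq_fintype_card, hcard]
  have h2 : (Nat.card G).factorization 2 = 1 := hG ▸ Nat.factorization_two_mul_of_odd hn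
  have hsyl : Nat.card (Sylow 2 G) = n := by
    obtain ⟨P⟩ := (inferInstance : Nonempty (Sylow 2 G))
    have hP : Nat.card P = 2 := by rw [P.card_eq_multiplicity, h2, pow_one]
    have := (P : Subgroup G).card_mul_index
    rw [hP, hG] at this
    rw [P.card_eq_index_normalizer, P.normalizer_eq_self_of_card_eq_two hinv hP]
    omega
  refine ⟨hsyl, ?_⟩
  rw [card_pow_eq_one_eq_card_orderOf_eq_add_one, Sylow.card_eq_card_orderOf_eq_two h2, hsyl]
end
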